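/- If the trace function β satisfies Condition 1 and γ ∈ [0,1), then M is a γ-contraction in the supremum norm: ‖MQ − Q^π‖ ≤ γ‖Q − Q^π‖ for all Q ∈ ℝ^n; consequently Q^π is the unique fixed point of M and lim_{i→∞} M^i Q = Q^π for every Q ∈ ℝ^n. -/

import Mathlib

open scoped BigOperators

/-- `P` is a transition function: `P s a` is a probability distribution on next states. -/
def IsTransition {S A : Type} [Fintype S] (P : S → A → S → ℝ) : Prop :=
  (∀ s a s', 0 ≤ P s a s') ∧ ∀ s a, ∑ s', P s a s' = 1

/-- `π` is a policy: `π s` is a probability distribution on actions. -/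
def IsPolicy {S A : Type} [Fintype A] (π : S → A → ℝ) : Prop :=
  (∀ s a, 0 ≤ π s a) ∧ ∀ s, ∑ a, π s a = 1

/-- A behavior policy assigns positive probability to every action in every state. -/
def IsBehavior {S A : Type} [Fintype A] (μ : S → A → ℝ) : Prop :=
  IsPolicy μ ∧ ∀ s a, 0 < μ s a

/-- The policy matrix `P_π((s,a),(s',a')) = P(s'|s,a)·π(a'|s')`. -/
def polMat {S A : Type} (P : S → A → S → ℝ) (π : S → A → ℝ) :
    Matrix (S × A) (S × A) ℝ :=
  fun x y => P x.1 x.2 y.1 * π y.1 y.2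

/-- The importance-sampling ratio `ρ(s,a) = π(a|s) / μ(a|s)`. -/
noncomputable def isRatio {S A : Type} (π μ : S → A → ℝ) (x : S × A) : ℝ :=
  π x.1 x.2 / μ x.1 x.2

/-- Probability under behavior policy `μ` of a length-`t` trajectory
`F = ((S_0,A_0),…,(S_t,A_t))`:  `∏_{k=1}^t P(S_k|S_{k-1},A_{k-1})·μ(A_k|S_k)`. -/
def prMu {S A : Type} (P : S → A → S → ℝ) (μ : S → A → ℝ) {t : ℕ}
    (F : Fin (t + 1) → S × A) : ℝ :=
  ∏ k : Fin t,
    (P (F k.castSucc).1 (F k.castSucc).2 (F k.succ).1 * μ (F k.succ).1 (F k.succ).2)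

/-- A trace function: a nonnegative weight for every finite trajectory,
equal to `1` on length-0 trajectories. -/
def IsTrace {S A : Type} (β : (t : ℕ) → (Fin (t + 1) → S × A) → ℝ) : Prop :=
  (∀ t F, 0 ≤ β t F) ∧ ∀ F : Fin 1 → S × A, β 0 F = 1

/-- Condition 1: `β(F_t) ≤ β(F_{t-1})·ρ_t` for every `t ≥ 1` and every trajectory `F_t`,
where `F_{t-1}` is the length-`(t-1)` prefix. -/
def Cond1 {S A : Type} (π μ : S → A → ℝ)
    (β : (t : ℕ) → (Fin (t + 1) → S × A) → ℝ) : Prop :=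
  ∀ (t : ℕ) (F : Fin (t + 2) → S × A),
    β (t + 1) F ≤ β t (fun k => F k.castSucc) * isRatio π μ (F (Fin.last (t + 1)))

/-- The matrix `B_t((s,a),(s',a')) = Σ_{F_t from (s,a) ending at (s',a')} Pr_μ(F_t)·β(F_t)`. -/
noncomputable def Bmat {S A : Type} [Fintype S] [Fintype A] [DecidableEq S] [DecidableEq A]
    (P : S → A → S → ℝ) (μ : S → A → ℝ)
    (β : (t : ℕ) → (Fin (t + 1) → S × A) → ℝ) (t : ℕ) :
    Matrix (S × A) (S × A) ℝ :=
  fun x y => ∑ F : Fin (t + 1) → S × A,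
    if F 0 = x ∧ F (Fin.last t) = y then prMu P μ F * β t F else 0

/-- The Bellman operator `T_π Q = R + γ P_π Q`. -/
noncomputable def Tpi {S A : Type} [Fintype S] [Fintype A]
    (P : S → A → S → ℝ) (R : S × A → ℝ) (π : S → A → ℝ) (γ : ℝ)
    (Q : S × A → ℝ) : S × A → ℝ :=
  fun x => R x + γ * (polMat P π).mulVec Q x

/-- The Bellman optimality operator
`(T Q)(s,a) = R(s,a) + γ Σ_{s'} P(s'|s,a) max_{a'} Q(s',a')`. -/
noncomputable def Topt {S A : Type} [Fintype S] [Fintype A] [Nonempty A]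
    (P : S → A → S → ℝ) (R : S × A → ℝ) (γ : ℝ) (Q : S × A → ℝ) : S × A → ℝ :=
  fun x => R x + γ * ∑ s', P x.1 x.2 s' * ⨆ a', Q (s', a')

/-- The operator `M Q = Q + Σ_{t=0}^∞ γ^t B_t (T_π Q − Q)`. -/
noncomputable def Mop {S A : Type} [Fintype S] [Fintype A] [DecidableEq S] [DecidableEq A]
    (P : S → A → S → ℝ) (R : S × A → ℝ) (π μ : S → A → ℝ)
    (β : (t : ℕ) → (Fin (t + 1) → S × A) → ℝ) (γ : ℝ)
    (Q : S × A → ℝ) : S × A → ℝ :=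
  fun x => Q x + ∑' t : ℕ,
    γ ^ t * (Bmat P μ β t).mulVec (fun y => Tpi P R π γ Q y - Q y) x

/-- The matrix `Z = Σ_{t=1}^∞ γ^t (B_{t−1} P_π − B_t)`. -/
noncomputable def Zmat {S A : Type} [Fintype S] [Fintype A] [DecidableEq S] [DecidableEq A]
    (P : S → A → S → ℝ) (π μ : S → A → ℝ)
    (β : (t : ℕ) → (Fin (t + 1) → S × A) → ℝ) (γ : ℝ) :
    Matrix (S × A) (S × A) ℝ :=
  fun x y => ∑' t : ℕ,
    γ ^ (t + 1) * ((Bmat P μ β t * polMat P π - Bmat P μ β (t + 1)) x y)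

/-- The matrix `C = Σ_{t=0}^∞ γ^t B_t`. -/
noncomputable def Cmat {S A : Type} [Fintype S] [Fintype A] [DecidableEq S] [DecidableEq A]
    (P : S → A → S → ℝ) (μ : S → A → ℝ)
    (β : (t : ℕ) → (Fin (t + 1) → S × A) → ℝ) (γ : ℝ) :
    Matrix (S × A) (S × A) ℝ :=
  fun x y => ∑' t : ℕ, γ ^ t * Bmat P μ β t x y

/-- The operator `M Q = Q + C (T_π Q − Q)` with `C = Σ_t γ^t B_t`. -/
noncomputable def MopC {S A : Type} [Fintype S] [Fintype A] [DecidableEq S] [DecidableEq A]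
    (P : S → A → S → ℝ) (R : S × A → ℝ) (π μ : S → A → ℝ)
    (β : (t : ℕ) → (Fin (t + 1) → S × A) → ℝ) (γ : ℝ)
    (Q : S × A → ℝ) : S × A → ℝ :=
  fun x => Q x + (Cmat P μ β γ).mulVec (fun y => Tpi P R π γ Q y - Q y) x

/-!
With `Δ = Q - Q^π`, the Bellman equation `T_π Q^π = Q^π` gives `T_π Q - Q = γ P_π Δ - Δ`, and
since `B_0 = I` the series defining `M` telescopes to `M Q - Q^π = Z Δ` with
`Z = Σ_t γ^(t+1) (B_t P_π - B_(t+1))`. Condition 1 says exactly that `B_(t+1) ≤ B_t P_π`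
entrywise, so `Z` is a nonnegative matrix. Applying the same identity to the constant vector `1`
(fixed by the stochastic matrix `P_π`) gives the row sums `Z 1 = 1 - (1 - γ) Σ_t γ^t B_t 1 ≤ γ`,
because the `t = 0` term of the last sum is already `1`. A nonnegative matrix with row sums at
most `γ` is `γ`-Lipschitz for the sup norm, and the remaining claims follow from this contraction
towards `Q^π`.
-/

open Matrix Filter Topology

section PointContraction

variable {X : Type*} [MetricSpace X] {f : X → X} {p : X} {γ : ℝ}

theorem isFixedPt_of_dist_apply_le (hf : ∀ x, dist (f x) p ≤ γ * dist x p) :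
    Function.IsFixedPt f p :=
  dist_le_zero.mp (by simpa using hf p)

theorem eq_of_isFixedPt_of_dist_apply_le (hf : ∀ x, dist (f x) p ≤ γ * dist x p)
    (hγ1 : γ < 1) {x : X} (hx : Function.IsFixedPt f x) : x = p := by
  have h := hf x
  rw [hx] at h
  exact dist_le_zero.mp (by nlinarith [dist_nonneg (x := x) (y := p)])

theorem dist_iterate_le_of_dist_apply_le (hf : ∀ x, dist (f x) p ≤ γ * dist x p)
    (hγ0 : 0 ≤ γ) (x : X) (n : ℕ) : dist (f^[n] x) p ≤ γ ^ n * dist x p := by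
  induction n with
  | zero => simp
  | succ n ih =>
    rw [Function.iterate_succ_apply', pow_succ', mul_assoc]
    exact (hf _).trans (mul_le_mul_of_nonneg_left ih hγ0)

theorem tendsto_iterate_of_dist_apply_le (hf : ∀ x, dist (f x) p ≤ γ * dist x p)
    (hγ0 : 0 ≤ γ) (hγ1 : γ < 1) (x : X) : Tendsto (fun n => f^[n] x) atTop (𝓝 p) := by
  rw [tendsto_iff_dist_tendsto_zero]
  refine squeeze_zero (fun _ => dist_nonneg) (dist_iterate_le_of_dist_apply_le hf hγ0 x) ?_
  simpa using (tendsto_pow_atTop_nhds_zero_of_lt_one hγ0 hγ1).mul_const (dist x p)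

end PointContraction

section NonnegMatrix

variable {ι : Type*} [Fintype ι] {M : Matrix ι ι ℝ}

theorem abs_mulVec_apply_le (i : ι) (hM : ∀ j, 0 ≤ M i j) (v : ι → ℝ) :
    |(M *ᵥ v) i| ≤ (M *ᵥ 1) i * ‖v‖ := by
  simp only [mulVec, dotProduct, Pi.one_apply, mul_one, Finset.sum_mul]
  refine (Finset.abs_sum_le_sum_abs _ _).trans (Finset.sum_le_sum fun j _ => ?_)
  rw [abs_mul, abs_of_nonneg (hM j), ← Real.norm_eq_abs]
  exact mul_le_mul_of_nonneg_left (norm_le_pi_norm v j) (hM j)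

theorem norm_mulVec_le_of_nonneg {c : ℝ} (hc : 0 ≤ c) (hM : ∀ i j, 0 ≤ M i j)
    (hrow : ∀ i, (M *ᵥ 1) i ≤ c) (v : ι → ℝ) : ‖M *ᵥ v‖ ≤ c * ‖v‖ :=
  (pi_norm_le_iff_of_nonneg (mul_nonneg hc (norm_nonneg v))).2 fun i =>
    (abs_mulVec_apply_le i (hM i) v).trans (mul_le_mul_of_nonneg_right (hrow i) (norm_nonneg v))

end NonnegMatrix

-- The matrices `B_t` of the paper relative to `P_π`: `B_0 = I`, and Condition 1 in matrix form,
-- `B_{t+1} ≤ B_t P_π` entrywise.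
structure IsTraceSeq {ι : Type*} [Fintype ι] [DecidableEq ι] (B : ℕ → Matrix ι ι ℝ)
    (Pm : Matrix ι ι ℝ) : Prop where
  stochastic : Pm ∈ rowStochastic ℝ ι
  zero : B 0 = 1
  nonneg : ∀ t i j, 0 ≤ B t i j
  succ_le : ∀ t i j, B (t + 1) i j ≤ (B t * Pm) i j

namespace IsTraceSeq

variable {ι : Type*} [Fintype ι] [DecidableEq ι] {B : ℕ → Matrix ι ι ℝ} {Pm : Matrix ι ι ℝ}
  {γ : ℝ}

theorem mulVec_one_nonneg (hB : IsTraceSeq B Pm) (t : ℕ) (i : ι) : 0 ≤ (B t *ᵥ 1) i :=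
  Finset.sum_nonneg fun j _ => by simpa using hB.nonneg t i j

theorem mulVec_one_le_one (hB : IsTraceSeq B Pm) (t : ℕ) (i : ι) : (B t *ᵥ 1) i ≤ 1 := by
  induction t with
  | zero => simp [hB.zero]
  | succ t ih =>
    calc (B (t + 1) *ᵥ 1) i ≤ ((B t * Pm) *ᵥ 1) i := by
          simp only [mulVec, dotProduct, Pi.one_apply, mul_one]
          exact Finset.sum_le_sum fun j _ => hB.succ_le t i j
      _ = (B t *ᵥ 1) i := by rw [← mulVec_mulVec, hB.stochastic.2]
      _ ≤ 1 := ih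

theorem abs_mulVec_le (hB : IsTraceSeq B Pm) (t : ℕ) (i : ι) (v : ι → ℝ) :
    |(B t *ᵥ v) i| ≤ ‖v‖ :=
  (abs_mulVec_apply_le i (hB.nonneg t i) v).trans
    (mul_le_of_le_one_left (norm_nonneg v) (hB.mulVec_one_le_one t i))

theorem summable_pow_mul_mulVec (hB : IsTraceSeq B Pm) (hγ0 : 0 ≤ γ) (hγ1 : γ < 1)
    (v : ι → ℝ) (i : ι) : Summable fun t => γ ^ t * (B t *ᵥ v) i :=
  .of_norm_bounded ((summable_geometric_of_lt_one hγ0 hγ1).mul_right ‖v‖) fun t => by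
    rw [norm_mul, norm_pow, Real.norm_of_nonneg hγ0, Real.norm_eq_abs]
    exact mul_le_mul_of_nonneg_left (hB.abs_mulVec_le t i v) (pow_nonneg hγ0 t)

theorem summable_defect (hB : IsTraceSeq B Pm) (hγ0 : 0 ≤ γ) (hγ1 : γ < 1)
    (v : ι → ℝ) (i : ι) :
    Summable fun t => γ ^ (t + 1) * ((B t * Pm - B (t + 1)) *ᵥ v) i := by
  have hfirst := (hB.summable_pow_mul_mulVec hγ0 hγ1 (Pm *ᵥ v) i).mul_left γ
  have hsecond := (summable_nat_add_iff 1).2 (hB.summable_pow_mul_mulVec hγ0 hγ1 v i)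
  refine (hfirst.sub hsecond).congr fun t => ?_
  simp only [sub_mulVec, ← mulVec_mulVec, Pi.sub_apply, pow_succ]
  ring

theorem tsum_defect_mulVec (hB : IsTraceSeq B Pm) (hγ0 : 0 ≤ γ) (hγ1 : γ < 1)
    (v : ι → ℝ) (i : ι) :
    ∑' t, γ ^ (t + 1) * ((B t * Pm - B (t + 1)) *ᵥ v) i =
      v i + ∑' t, γ ^ t * (B t *ᵥ (γ • (Pm *ᵥ v) - v)) i := by
  set a : ℕ → ℝ := fun t => γ * (γ ^ t * (B t *ᵥ (Pm *ᵥ v)) i)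
  set c : ℕ → ℝ := fun t => γ ^ t * (B t *ᵥ v) i
  have ha : Summable a := (hB.summable_pow_mul_mulVec hγ0 hγ1 (Pm *ᵥ v) i).mul_left γ
  have hc : Summable c := hB.summable_pow_mul_mulVec hγ0 hγ1 v i
  have hc0 : c 0 = v i := by simp [c, hB.zero]
  calc ∑' t, γ ^ (t + 1) * ((B t * Pm - B (t + 1)) *ᵥ v) i = ∑' t, (a t - c (t + 1)) :=
        tsum_congr fun t => by
          simp only [a, c, sub_mulVec, ← mulVec_mulVec, Pi.sub_apply, pow_succ]
          ring
    _ = c 0 + ∑' t, (a t - c t) := by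
        rw [ha.tsum_sub ((summable_nat_add_iff 1).2 hc), ha.tsum_sub hc, hc.tsum_eq_zero_add]
        ring
    _ = v i + ∑' t, γ ^ t * (B t *ᵥ (γ • (Pm *ᵥ v) - v)) i := by
        rw [hc0]
        congr 1
        exact tsum_congr fun t => by
          simp only [a, c, mulVec_sub, mulVec_smul, Pi.sub_apply, Pi.smul_apply, smul_eq_mul]
          ring

theorem tsum_defect_one_le (hB : IsTraceSeq B Pm) (hγ0 : 0 ≤ γ) (hγ1 : γ < 1) (i : ι) :
    ∑' t, γ ^ (t + 1) * ((B t * Pm - B (t + 1)) *ᵥ 1) i ≤ γ := by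
  have hone : γ • (Pm *ᵥ 1) - 1 = (γ - 1) • (1 : ι → ℝ) := by
    rw [hB.stochastic.2, sub_smul, one_smul]
  have hmass : 1 ≤ ∑' t, γ ^ t * (B t *ᵥ 1) i := by
    have := (hB.summable_pow_mul_mulVec hγ0 hγ1 1 i).le_tsum 0 fun t _ =>
      mul_nonneg (pow_nonneg hγ0 t) (hB.mulVec_one_nonneg t i)
    simpa [hB.zero] using this
  rw [hB.tsum_defect_mulVec hγ0 hγ1, hone]
  simp only [mulVec_smul, Pi.smul_apply, smul_eq_mul, mul_left_comm _ (γ - 1)]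
  rw [tsum_mul_left, Pi.one_apply]
  nlinarith

end IsTraceSeq

section Trajectory

variable {S A : Type} {P : S → A → S → ℝ} {μ : S → A → ℝ}

theorem prMu_nonneg [Fintype S] [Fintype A] (hP : IsTransition P) (hμ : IsPolicy μ) {t : ℕ}
    (F : Fin (t + 1) → S × A) : 0 ≤ prMu P μ F :=
  Finset.prod_nonneg fun _ _ => mul_nonneg (hP.1 _ _ _) (hμ.1 _ _)

theorem prMu_snoc {t : ℕ} (F : Fin (t + 1) → S × A) (y : S × A) :
    prMu P μ (Fin.snoc F y : Fin (t + 2) → S × A) =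
      prMu P μ F * (P (F (Fin.last t)).1 (F (Fin.last t)).2 y.1 * μ y.1 y.2) := by
  simp only [prMu, Fin.prod_univ_castSucc, Fin.succ_castSucc, Fin.snoc_castSucc, Fin.succ_last,
    Fin.snoc_last]

end Trajectory

section MDP

variable {S A : Type} [Fintype S] [Fintype A] [DecidableEq S] [DecidableEq A]
  {P : S → A → S → ℝ} {π μ : S → A → ℝ} {β : (t : ℕ) → (Fin (t + 1) → S × A) → ℝ}

theorem polMat_mem_rowStochastic (hP : IsTransition P) (hπ : IsPolicy π) :
    polMat P π ∈ rowStochastic ℝ (S × A) :=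
  mem_rowStochastic_iff_sum.2 ⟨fun _ _ => mul_nonneg (hP.1 _ _ _) (hπ.1 _ _), fun x => by
    simp [polMat, Fintype.sum_prod_type, ← Finset.mul_sum, hπ.2, hP.2]⟩

theorem Bmat_zero (hβ : IsTrace β) : Bmat P μ β 0 = 1 := by
  ext x y
  rw [Bmat, ← (Equiv.funUnique (Fin 1) (S × A)).symm.sum_comp]
  rcases eq_or_ne x y with rfl | hxy <;> simp [prMu, hβ.2, *]

theorem Bmat_mul_apply (M : Matrix (S × A) (S × A) ℝ) (t : ℕ) (x y : S × A) :
    (Bmat P μ β t * M) x y = ∑ F : Fin (t + 1) → S × A,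
      if F 0 = x then prMu P μ F * β t F * M (F (Fin.last t)) y else 0 := by
  simp only [Matrix.mul_apply, Bmat, Finset.sum_mul, ite_mul, zero_mul, ite_and]
  rw [Finset.sum_comm]
  simp

theorem Bmat_succ_apply (t : ℕ) (x y : S × A) :
    Bmat P μ β (t + 1) x y = ∑ F : Fin (t + 1) → S × A,
      if F 0 = x then prMu P μ (Fin.snoc F y : Fin (t + 2) → S × A) *
        β (t + 1) (Fin.snoc F y) else 0 := by
  rw [Bmat, ← (Fin.snocEquiv fun _ => S × A).sum_comp, Fintype.sum_prod_type, Finset.sum_comm]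
  refine Finset.sum_congr rfl fun F _ => ?_
  by_cases hF : F 0 = x <;> simp [hF, Fin.snocEquiv]

theorem Bmat_succ_le (hP : IsTransition P) (hμ : IsBehavior μ)
    (hc : Cond1 π μ β) (t : ℕ) (x y : S × A) :
    Bmat P μ β (t + 1) x y ≤ (Bmat P μ β t * polMat P π) x y := by
  rw [Bmat_succ_apply, Bmat_mul_apply]
  refine Finset.sum_le_sum fun F _ => ?_
  split_ifs with hF
  · have hcF := hc t (Fin.snoc F y)
    simp only [Fin.snoc_castSucc, Fin.snoc_last] at hcF
    have hμy := hμ.2 y.1 y.2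
    rw [prMu_snoc]
    calc prMu P μ F * (P (F (Fin.last t)).1 (F (Fin.last t)).2 y.1 * μ y.1 y.2) *
          β (t + 1) (Fin.snoc F y)
        ≤ prMu P μ F * (P (F (Fin.last t)).1 (F (Fin.last t)).2 y.1 * μ y.1 y.2) *
          (β t F * isRatio π μ y) :=
          mul_le_mul_of_nonneg_left hcF <|
            mul_nonneg (prMu_nonneg hP hμ.1 F) (mul_nonneg (hP.1 _ _ _) hμy.le)
      -- the factor `μ(y)` of `Pr_μ` cancels the denominator of the ratio `ρ`
      _ = prMu P μ F * β t F * polMat P π (F (Fin.last t)) y := by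
          simp only [isRatio, polMat]
          field_simp
  · rfl

theorem isTraceSeq_Bmat (hP : IsTransition P) (hπ : IsPolicy π) (hμ : IsBehavior μ)
    (hβ : IsTrace β) (hc : Cond1 π μ β) : IsTraceSeq (Bmat P μ β) (polMat P π) where
  stochastic := polMat_mem_rowStochastic hP hπ
  zero := Bmat_zero hβ
  nonneg t _ _ := Finset.sum_nonneg fun F _ => by
    split_ifs
    exacts [mul_nonneg (prMu_nonneg hP hμ.1 F) (hβ.1 t F), le_rfl]
  succ_le := Bmat_succ_le hP hμ hc

variable {R : S × A → ℝ} {γ : ℝ}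

theorem Zmat_mulVec_apply (hB : IsTraceSeq (Bmat P μ β) (polMat P π)) (hγ0 : 0 ≤ γ)
    (hγ1 : γ < 1) (v : S × A → ℝ) (x : S × A) :
    (Zmat P π μ β γ *ᵥ v) x =
      ∑' t, γ ^ (t + 1) * ((Bmat P μ β t * polMat P π - Bmat P μ β (t + 1)) *ᵥ v) x := by
  have hentry (y : S × A) : Summable fun t =>
      γ ^ (t + 1) * (Bmat P μ β t * polMat P π - Bmat P μ β (t + 1)) x y := by
    simpa [mulVec_single_one] using hB.summable_defect hγ0 hγ1 (Pi.single y 1) x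
  simp only [mulVec, dotProduct, Zmat, ← tsum_mul_right]
  rw [← Summable.tsum_finsetSum fun y _ => (hentry y).mul_right (v y)]
  simp [Finset.mul_sum, mul_assoc]

theorem Zmat_nonneg (hB : IsTraceSeq (Bmat P μ β) (polMat P π)) (hγ0 : 0 ≤ γ) (x y : S × A) :
    0 ≤ Zmat P π μ β γ x y :=
  tsum_nonneg fun t => mul_nonneg (pow_nonneg hγ0 _) (sub_nonneg.2 (hB.succ_le t x y))

theorem Zmat_mulVec_one_le (hB : IsTraceSeq (Bmat P μ β) (polMat P π)) (hγ0 : 0 ≤ γ)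
    (hγ1 : γ < 1) (x : S × A) : (Zmat P π μ β γ *ᵥ 1) x ≤ γ := by
  rw [Zmat_mulVec_apply hB hγ0 hγ1]
  exact hB.tsum_defect_one_le hγ0 hγ1 x

theorem Mop_sub_eq_Zmat_mulVec (hB : IsTraceSeq (Bmat P μ β) (polMat P π)) (hγ0 : 0 ≤ γ)
    (hγ1 : γ < 1) {Qpi : S × A → ℝ} (hQpi : Tpi P R π γ Qpi = Qpi) (Q : S × A → ℝ) :
    Mop P R π μ β γ Q - Qpi = Zmat P π μ β γ *ᵥ (Q - Qpi) := by
  have hbellman : (fun y => Tpi P R π γ Q y - Q y) =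
      γ • (polMat P π *ᵥ (Q - Qpi)) - (Q - Qpi) := by
    funext y
    have hy := congrFun hQpi y
    simp only [Tpi, mulVec_sub, Pi.sub_apply, Pi.smul_apply, smul_eq_mul] at hy ⊢
    linarith
  funext x
  rw [Zmat_mulVec_apply hB hγ0 hγ1, hB.tsum_defect_mulVec hγ0 hγ1, ← hbellman]
  simp only [Mop, Pi.sub_apply]
  ring

theorem norm_Mop_sub_le (hB : IsTraceSeq (Bmat P μ β) (polMat P π)) (hγ0 : 0 ≤ γ)
    (hγ1 : γ < 1) {Qpi : S × A → ℝ} (hQpi : Tpi P R π γ Qpi = Qpi) (Q : S × A → ℝ) :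
    ‖Mop P R π μ β γ Q - Qpi‖ ≤ γ * ‖Q - Qpi‖ := by
  rw [Mop_sub_eq_Zmat_mulVec hB hγ0 hγ1 hQpi]
  exact norm_mulVec_le_of_nonneg hγ0 (Zmat_nonneg hB hγ0) (Zmat_mulVec_one_le hB hγ0 hγ1) _

end MDP

theorem stmt2_general {S A : Type} [Fintype S] [Fintype A] [DecidableEq S] [DecidableEq A]
    (P : S → A → S → ℝ) (R : S × A → ℝ) (π μ : S → A → ℝ) (γ : ℝ)
    (β : (t : ℕ) → (Fin (t + 1) → S × A) → ℝ)
    (hP : IsTransition P) (hπ : IsPolicy π) (hμ : IsBehavior μ) (hβ : IsTrace β)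
    (hγ0 : 0 ≤ γ) (hγ1 : γ < 1)
    (hc : Cond1 π μ β)
    (Qpi : S × A → ℝ) (hQpi : Tpi P R π γ Qpi = Qpi) :
    (∀ Q : S × A → ℝ, ‖Mop P R π μ β γ Q - Qpi‖ ≤ γ * ‖Q - Qpi‖) ∧
    Mop P R π μ β γ Qpi = Qpi ∧
    (∀ Q : S × A → ℝ, Mop P R π μ β γ Q = Q → Q = Qpi) ∧
    ∀ Q : S × A → ℝ,
      Filter.Tendsto (fun i => (Mop P R π μ β γ)^[i] Q) Filter.atTop (nhds Qpi) := by
  have hB := isTraceSeq_Bmat hP hπ hμ hβ hc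
  have hnorm := norm_Mop_sub_le hB hγ0 hγ1 hQpi
  have hdist : ∀ Q, dist (Mop P R π μ β γ Q) Qpi ≤ γ * dist Q Qpi := by
    simpa only [dist_eq_norm] using hnorm
  exact ⟨hnorm, isFixedPt_of_dist_apply_le hdist,
    fun _ hQ => eq_of_isFixedPt_of_dist_apply_le hdist hγ1 hQ,
    tendsto_iterate_of_dist_apply_le hdist hγ0 hγ1⟩

/-- under Condition 1 and `γ ∈ [0,1)`, `M` is a `γ`-contraction in the sup norm,
`Q^π` is its unique fixed point, and `M^i Q → Q^π` for every `Q`. -/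
theorem stmt2 {S A : Type} [Fintype S] [Fintype A] [DecidableEq S] [DecidableEq A]
    [Nonempty S] [Nonempty A]
    (P : S → A → S → ℝ) (R : S × A → ℝ) (π μ : S → A → ℝ) (γ : ℝ)
    (β : (t : ℕ) → (Fin (t + 1) → S × A) → ℝ)
    (hP : IsTransition P) (hπ : IsPolicy π) (hμ : IsBehavior μ) (hβ : IsTrace β)
    (hγ0 : 0 ≤ γ) (hγ1 : γ < 1)
    (hc : Cond1 π μ β)
    (Qpi : S × A → ℝ) (hQpi : Tpi P R π γ Qpi = Qpi) :
    (∀ Q : S × A → ℝ, ‖Mop P R π μ β γ Q - Qpi‖ ≤ γ * ‖Q - Qpi‖) ∧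
    Mop P R π μ β γ Qpi = Qpi ∧
    (∀ Q : S × A → ℝ, Mop P R π μ β γ Q = Q → Q = Qpi) ∧
    ∀ Q : S × A → ℝ,
      Filter.Tendsto (fun i => (Mop P R π μ β γ)^[i] Q) Filter.atTop (nhds Qpi) :=
  stmt2_general P R π μ γ β hP hπ hμ hβ hγ0 hγ1 hc Qpi hQpi
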